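/- If x : ℝ → ℝ is a continuously differentiable T-periodic function, then max x − min x ≤ (1/2)·∫₀ᵀ |x'(t)| dt. Consequently ‖x − x̄‖∞ ≤ (T/2)·‖x'‖∞, where x̄ = (1/T)·∫₀ᵀ x(t) dt, i.e. the optimal constant k in the inequality ‖x − x̄‖∞ ≤ k·‖x'‖∞ over T-periodic C¹ functions satisfies k ≤ T/2. -/

import Mathlib

open Real Set MeasureTheory

/-!
Going from `s` to `t` and then on from `t` to `s + T` covers one period, and by periodicity both
legs have the same displacement `x t - x s` up to sign. Each leg is bounded by the integral of
`|x'|` over it, so twice the displacement is at most `∫₀ᵀ |x'|`. The sup-norm bound follows by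
averaging this over `s ∈ [0, T]` and using `∫₀ᵀ |x'| ≤ T ‖x'‖∞`.
-/

theorem Function.Periodic.deriv {𝕜 E : Type*} [NontriviallyNormedField 𝕜] [NormedAddCommGroup E]
    [NormedSpace 𝕜 E] {f : 𝕜 → E} {c : 𝕜} (hf : Function.Periodic f c) :
    Function.Periodic (deriv f) c := fun t => by
  rw [← deriv_comp_add_const, funext hf]

section Periodic

variable {E : Type*} [NormedAddCommGroup E] [NormedSpace ℝ E] {x : ℝ → E} {T : ℝ}

theorem ContDiff.norm_sub_le_integral_norm_deriv (hx : ContDiff ℝ 1 x) {a b : ℝ} (hab : a ≤ b) :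
    ‖x b - x a‖ ≤ ∫ τ in a..b, ‖deriv x τ‖ :=
  norm_sub_le_integral_of_norm_deriv_le_of_le hab hx.continuous.continuousOn
    (hx.differentiable one_ne_zero).differentiableOn (.of_forall fun _ _ => le_rfl)
    ((hx.continuous_deriv le_rfl).norm.intervalIntegrable a b)

theorem norm_sub_le_half_integral_norm_deriv_of_periodic_of_mem_Icc
    (hper : Function.Periodic x T) (hx : ContDiff ℝ 1 x) {s t : ℝ} (ht : t ∈ Icc s (s + T)) :
    ‖x t - x s‖ ≤ (1 / 2) * ∫ τ in (0:ℝ)..T, ‖deriv x τ‖ := by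
  have hint : ∀ a b : ℝ, IntervalIntegrable (fun τ => ‖deriv x τ‖) volume a b :=
    (hx.continuous_deriv le_rfl).norm.intervalIntegrable
  have first_leg := hx.norm_sub_le_integral_norm_deriv ht.1
  have second_leg := hx.norm_sub_le_integral_norm_deriv ht.2
  rw [hper s, norm_sub_rev] at second_leg
  have hnorm_per : Function.Periodic (fun τ => ‖deriv x τ‖) T := hper.deriv.comp norm
  have one_period : (∫ τ in s..t, ‖deriv x τ‖) + ∫ τ in t..s + T, ‖deriv x τ‖
      = ∫ τ in (0:ℝ)..T, ‖deriv x τ‖ := by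
    rw [intervalIntegral.integral_add_adjacent_intervals (hint s t) (hint t (s + T)),
      hnorm_per.intervalIntegral_add_eq s 0, zero_add]
  linarith

theorem norm_sub_le_half_integral_norm_deriv_of_periodic
    (hper : Function.Periodic x T) (hT : 0 < T) (hx : ContDiff ℝ 1 x) (t s : ℝ) :
    ‖x t - x s‖ ≤ (1 / 2) * ∫ τ in (0:ℝ)..T, ‖deriv x τ‖ := by
  obtain ⟨t', ht', hxt⟩ := hper.exists_mem_Ico hT t s
  rw [hxt]
  exact norm_sub_le_half_integral_norm_deriv_of_periodic_of_mem_Icc hper hx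
    (Ico_subset_Icc_self ht')

end Periodic

theorem abs_sub_mul_integral_le_of_forall_abs_sub_le {f : ℝ → ℝ} {a b c C : ℝ} (hab : a < b)
    (hf : IntervalIntegrable f volume a b) (hC : ∀ τ ∈ uIoc a b, |c - f τ| ≤ C) :
    |c - (1 / (b - a)) * ∫ τ in a..b, f τ| ≤ C := by
  have hba : 0 < b - a := sub_pos.2 hab
  have hmean : c - (1 / (b - a)) * ∫ τ in a..b, f τ = (1 / (b - a)) * ∫ τ in a..b, (c - f τ) := by
    rw [intervalIntegral.integral_sub intervalIntegrable_const hf, intervalIntegral.integral_const,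
      smul_eq_mul]
    field_simp
  have hbound : ‖∫ τ in a..b, (c - f τ)‖ ≤ C * |b - a| :=
    intervalIntegral.norm_integral_le_of_norm_le_const fun τ hτ =>
      (Real.norm_eq_abs _).trans_le (hC τ hτ)
  rw [Real.norm_eq_abs, abs_of_pos hba] at hbound
  rw [hmean, abs_mul, abs_of_pos (one_div_pos.2 hba)]
  calc 1 / (b - a) * |∫ τ in a..b, c - f τ| ≤ 1 / (b - a) * (C * (b - a)) := by gcongr
    _ = C := by field_simp

/-- for a `T`-periodic `C¹` function, `max x - min x ≤ ½ ∫₀ᵀ |x'|`;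
consequently `‖x - x̄‖∞ ≤ (T/2)‖x'‖∞`, i.e. the optimal constant `k` satisfies `k ≤ T/2`. -/
theorem periodic_oscillation_bound (T : ℝ) (hT : 0 < T) (x : ℝ → ℝ)
    (hper : Function.Periodic x T) (hC1 : ContDiff ℝ 1 x) :
    (∀ t s : ℝ, x t - x s ≤ (1 / 2) * ∫ τ in (0:ℝ)..T, |deriv x τ|) ∧
    (∀ M : ℝ, (∀ τ : ℝ, |deriv x τ| ≤ M) →
      ∀ t : ℝ, |x t - (1 / T) * ∫ τ in (0:ℝ)..T, x τ| ≤ (T / 2) * M) := by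
  have hosc : ∀ t s : ℝ, |x t - x s| ≤ (1 / 2) * ∫ τ in (0:ℝ)..T, |deriv x τ| := by
    simpa only [Real.norm_eq_abs] using
      norm_sub_le_half_integral_norm_deriv_of_periodic hper hT hC1
  refine ⟨fun t s => (le_abs_self _).trans (hosc t s), fun M hM t => ?_⟩
  have htotal : ∫ τ in (0:ℝ)..T, |deriv x τ| ≤ T * M := by
    calc ∫ τ in (0:ℝ)..T, |deriv x τ| ≤ ∫ _ in (0:ℝ)..T, M :=
          intervalIntegral.integral_mono_on hT.le
            ((hC1.continuous_deriv le_rfl).abs.intervalIntegrable 0 T) intervalIntegrable_const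
            fun τ _ => hM τ
      _ = T * M := by simp
  simpa only [sub_zero] using abs_sub_mul_integral_le_of_forall_abs_sub_le hT
    (hC1.continuous.intervalIntegrable 0 T) fun τ _ => by linarith [hosc t τ]
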